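/- arXiv:1412.5229 — 5 statements merged into one kernel-verified Lean document; each statement's English description precedes it below -/
import Mathlib

section
/- Let 0 < a < b be reals, let α : [a,b] → (0,1) be continuously differentiable, and let β > -1. If x(t) = (ln(t/a))^β, then for every t ∈ (a,b] the left Hadamard–Marchaud fractional derivative of variable order α(t) satisfies ${}_a𝔻_t^{α(t)} x(t) = \frac{Γ(β+1)}{Γ(β-α(t)+1)} (\ln\frac{t}{a})^{β-α(t)}$. -/
/-!
With `L = ln (t / a)` and `A = α t`, the substitution `τ = a (t / a) ^ u` turns the Marchaud
integral into `L ^ (β - A) * J`, where `J = ∫₀¹ (1 - u ^ β) (1 - u) ^ (-A - 1) du`, so the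
derivative equals `L ^ (β - A) (1 + A J) / Γ(1 - A)`. The function
`(1 - u ^ (β + 1)) (1 - u) ^ (-A)` runs from `1` to `0` on `[0, 1]` and has derivative
`A (1 - u ^ β) (1 - u) ^ (-A - 1) - (β + 1 - A) u ^ β (1 - u) ^ (-A)`; integrating gives
`1 + A J = (β + 1 - A) B(β + 1, 1 - A) = Γ(β + 1) Γ(1 - A) / Γ(β - A + 1)`.
-/

/-- The left Hadamard–Marchaud fractional derivative of variable order `α t`. -/
noncomputable def hadamardMarchaud (a : ℝ) (α : ℝ → ℝ) (x : ℝ → ℝ) (t : ℝ) : ℝ :=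
  (x t / Real.Gamma (1 - α t)) * (Real.log (t / a)) ^ (-(α t)) +
  (α t / Real.Gamma (1 - α t)) *
    ∫ τ in a..t, ((x t - x τ) / τ) * (Real.log (t / τ)) ^ (-(α t) - 1)

open Real MeasureTheory Set Filter Topology intervalIntegral

lemma one_sub_rpow_le_mul_one_sub {c u : ℝ} (hu0 : 0 ≤ u) (hu1 : u ≤ 1) :
    1 - u ^ c ≤ max 1 c * (1 - u) := by
  rcases le_total c 1 with hc1 | hc1
  · have := self_le_rpow_of_le_one hu0 hu1 hc1
    nlinarith [le_max_left 1 c]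
  · have bernoulli := one_add_mul_self_le_rpow_one_add (s := u - 1) (by linarith) hc1
    rw [add_sub_cancel] at bernoulli
    nlinarith [le_max_right 1 c]

lemma ofReal_rpow_mul_one_sub_rpow {x : ℝ} (hx : x ∈ Icc (0 : ℝ) 1) (p q : ℝ) :
    ((x ^ (p - 1) * (1 - x) ^ (q - 1) : ℝ) : ℂ) =
      (x : ℂ) ^ ((p : ℂ) - 1) * (1 - (x : ℂ)) ^ ((q : ℂ) - 1) := by
  rw [Complex.ofReal_mul, Complex.ofReal_cpow hx.1, Complex.ofReal_cpow (sub_nonneg.2 hx.2)]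
  push_cast
  rfl

lemma intervalIntegrable_rpow_mul_one_sub_rpow {p q : ℝ} (hp : 0 < p) (hq : 0 < q) :
    IntervalIntegrable (fun u ↦ u ^ (p - 1) * (1 - u) ^ (q - 1)) volume 0 1 := by
  have h := (Complex.betaIntegral_convergent (u := p) (v := q) (by simpa) (by simpa)).norm
  refine h.congr_uIoo fun x hx ↦ ?_
  rw [uIoo_of_le zero_le_one] at hx
  dsimp only
  rw [← ofReal_rpow_mul_one_sub_rpow (Ioo_subset_Icc_self hx), Complex.norm_real, norm_of_nonneg]
  exact mul_nonneg (rpow_nonneg hx.1.le _) (rpow_nonneg (by linarith [hx.2]) _)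

lemma integral_rpow_mul_one_sub_rpow {p q : ℝ} (hp : 0 < p) (hq : 0 < q) :
    ∫ u in (0 : ℝ)..1, u ^ (p - 1) * (1 - u) ^ (q - 1) = Gamma p * Gamma q / Gamma (p + q) := by
  have h := Complex.Gamma_mul_Gamma_eq_betaIntegral (s := p) (t := q) (by simpa) (by simpa)
  rw [Complex.betaIntegral, ← integral_congr fun x hx ↦ ofReal_rpow_mul_one_sub_rpow
    (by rwa [uIcc_of_le zero_le_one] at hx) p q, integral_ofReal, Complex.Gamma_ofReal,
    Complex.Gamma_ofReal, ← Complex.ofReal_add, Complex.Gamma_ofReal] at h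
  rw [eq_div_iff (Gamma_pos_of_pos (add_pos hp hq)).ne', mul_comm]
  exact_mod_cast h.symm

-- Holds for every `s`: at `s = 0` both sides vanish, as `Gamma 0 = 0` and `x / 0 = 0`.
lemma mul_div_Gamma_add_one (s x : ℝ) : s * x / Gamma (s + 1) = x / Gamma s := by
  rcases eq_or_ne s 0 with rfl | hs
  · simp
  · rw [Gamma_add_one hs, mul_div_mul_left x _ hs]

lemma intervalIntegrable_one_sub_rpow_mul_one_sub_rpow_of_nonneg {c A : ℝ} (hc : 0 ≤ c)
    (hA : A < 1) :
    IntervalIntegrable (fun u ↦ (1 - u ^ c) * (1 - u) ^ (-A - 1)) volume 0 1 := by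
  have hbound : IntervalIntegrable (fun u ↦ max 1 c * (1 - u) ^ (-A)) volume 0 1 := by
    have h := (intervalIntegrable_rpow' (a := 0) (b := 1) (by linarith : -1 < -A)).comp_sub_left 1
    simpa using h.symm.const_mul (max 1 c)
  refine hbound.mono_fun' (by fun_prop) ?_
  rw [uIoc_of_le zero_le_one]
  refine ae_restrict_of_forall_mem measurableSet_Ioc fun u hu ↦ ?_
  dsimp only
  rcases hu.2.eq_or_lt with rfl | hu1
  · simp only [one_rpow, sub_self, zero_mul, norm_zero]
    positivity
  have h1u : 0 < 1 - u := sub_pos.2 hu1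
  have hpow : (1 - u) ^ (-A) = (1 - u) * (1 - u) ^ (-A - 1) := by
    rw [mul_comm, ← rpow_add_one h1u.ne', sub_add_cancel]
  rw [norm_of_nonneg (mul_nonneg (sub_nonneg.2 (rpow_le_one hu.1.le hu.2 hc))
    (rpow_nonneg h1u.le _)), hpow, ← mul_assoc]
  exact mul_le_mul_of_nonneg_right (one_sub_rpow_le_mul_one_sub hu.1.le hu.2)
    (rpow_nonneg h1u.le _)

lemma intervalIntegrable_one_sub_rpow_mul_one_sub_rpow {β A : ℝ} (hβ : -1 < β) (hA : A < 1) :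
    IntervalIntegrable (fun u ↦ (1 - u ^ β) * (1 - u) ^ (-A - 1)) volume 0 1 := by
  have hbeta := intervalIntegrable_rpow_mul_one_sub_rpow (p := β + 1) (q := 1 - A)
    (by linarith) (by linarith)
  simp only [add_sub_cancel_right, sub_sub_cancel_left] at hbeta
  have hK := intervalIntegrable_one_sub_rpow_mul_one_sub_rpow_of_nonneg (c := β + 1)
    (by linarith) hA
  refine (hK.sub hbeta).congr_uIoo fun u hu ↦ ?_
  rw [uIoo_of_le zero_le_one] at hu
  have h1u : 0 < 1 - u := sub_pos.2 hu.2
  dsimp only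
  rw [rpow_add_one hu.1.ne', ← sub_add_cancel (-A) 1, rpow_add_one h1u.ne', sub_add_cancel]
  ring

section BetaPrimitive

variable {β A : ℝ}

lemma hasDerivAt_one_sub_rpow_mul_one_sub_rpow {u : ℝ} (hu : u ∈ Ioo (0 : ℝ) 1) :
    HasDerivAt (fun u ↦ (1 - u ^ (β + 1)) * (1 - u) ^ (-A))
      (A * ((1 - u ^ β) * (1 - u) ^ (-A - 1)) - (β + 1 - A) * (u ^ β * (1 - u) ^ (-A))) u := by
  have h1u : 0 < 1 - u := sub_pos.2 hu.2
  have hleft := (hasDerivAt_rpow_const (p := β + 1) (Or.inl hu.1.ne')).const_sub 1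
  have hright : HasDerivAt (fun u ↦ (1 - u) ^ (-A)) (-A * (1 - u) ^ (-A - 1) * -1) u :=
    (hasDerivAt_rpow_const (p := -A) (Or.inl h1u.ne')).comp u
      ((hasDerivAt_id u).const_sub 1)
  refine (hleft.mul hright).congr_deriv ?_
  rw [add_sub_cancel_right, rpow_add_one hu.1.ne', ← sub_add_cancel (-A) 1,
    rpow_add_one h1u.ne', sub_add_cancel]
  ring

lemma tendsto_one_sub_rpow_mul_one_sub_rpow_zero (hβ : -1 < β) :
    Tendsto (fun u : ℝ ↦ (1 - u ^ (β + 1)) * (1 - u) ^ (-A)) (𝓝[>] 0) (𝓝 1) := by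
  have hcont : ContinuousAt (fun u : ℝ ↦ (1 - u ^ (β + 1)) * (1 - u) ^ (-A)) 0 :=
    (continuousAt_const.sub (continuousAt_rpow_const 0 _ (Or.inr (by linarith)))).mul
      ((continuousAt_const.sub continuousAt_id).rpow_const (Or.inl (by norm_num)))
  simpa [zero_rpow (by linarith : β + 1 ≠ 0)] using hcont.tendsto.mono_left nhdsWithin_le_nhds

lemma tendsto_one_sub_rpow_mul_one_sub_rpow_one (hβ : -1 < β) (hA : A < 1) :
    Tendsto (fun u : ℝ ↦ (1 - u ^ (β + 1)) * (1 - u) ^ (-A)) (𝓝[<] 1) (𝓝 0) := by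
  have hbound : Tendsto (fun u : ℝ ↦ max 1 (β + 1) * (1 - u) ^ (1 - A)) (𝓝[<] 1) (𝓝 0) := by
    have hcont : ContinuousAt (fun u : ℝ ↦ max 1 (β + 1) * (1 - u) ^ (1 - A)) 1 :=
      continuousAt_const.mul
        ((continuousAt_const.sub continuousAt_id).rpow_const (Or.inr (by linarith)))
    simpa [zero_rpow (by linarith : 1 - A ≠ 0)] using hcont.tendsto.mono_left nhdsWithin_le_nhds
  refine tendsto_of_tendsto_of_tendsto_of_le_of_le' tendsto_const_nhds hbound ?_ ?_
  all_goals filter_upwards [Ioo_mem_nhdsLT (zero_lt_one' ℝ)] with u hu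
  all_goals have h1u : 0 < 1 - u := sub_pos.2 hu.2
  · exact mul_nonneg (sub_nonneg.2 (rpow_le_one hu.1.le hu.2.le (by linarith)))
      (rpow_nonneg h1u.le _)
  · rw [← sub_add_cancel (1 - A) 1, rpow_add_one h1u.ne', sub_sub_cancel_left,
      mul_comm _ (1 - u), ← mul_assoc]
    exact mul_le_mul_of_nonneg_right (one_sub_rpow_le_mul_one_sub hu.1.le hu.2.le)
      (rpow_nonneg h1u.le _)

end BetaPrimitive

lemma one_add_mul_integral_one_sub_rpow_mul_one_sub_rpow {β A : ℝ} (hβ : -1 < β) (hA : A < 1) :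
    1 + A * ∫ u in (0 : ℝ)..1, (1 - u ^ β) * (1 - u) ^ (-A - 1) =
      Gamma (β + 1) * Gamma (1 - A) / Gamma (β - A + 1) := by
  have hβ1 : 0 < β + 1 := by linarith
  have hA1 : 0 < 1 - A := by linarith
  have hB := intervalIntegrable_rpow_mul_one_sub_rpow hβ1 hA1
  have hbeta := integral_rpow_mul_one_sub_rpow hβ1 hA1
  simp only [add_sub_cancel_right, sub_sub_cancel_left] at hB hbeta
  have hJ := intervalIntegrable_one_sub_rpow_mul_one_sub_rpow hβ hA
  have hftc := integral_eq_sub_of_hasDerivAt_of_tendsto zero_lt_one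
    (fun u hu ↦ hasDerivAt_one_sub_rpow_mul_one_sub_rpow hu)
    ((hJ.const_mul A).sub (hB.const_mul _)) (tendsto_one_sub_rpow_mul_one_sub_rpow_zero hβ)
    (tendsto_one_sub_rpow_mul_one_sub_rpow_one hβ hA)
  rw [integral_sub (hJ.const_mul A) (hB.const_mul _), intervalIntegral.integral_const_mul,
    intervalIntegral.integral_const_mul, hbeta] at hftc
  rw [← mul_div_Gamma_add_one, show β - A + 1 + 1 = β + 1 + (1 - A) by ring]
  linear_combination hftc

lemma integral_exp_smul_comp_exp {E : Type*} [NormedAddCommGroup E] [NormedSpace ℝ E] {c d : ℝ}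
    (hcd : c ≤ d) (g : ℝ → E) :
    ∫ s in c..d, exp s • g (exp s) = ∫ τ in exp c..exp d, g τ := by
  rw [integral_of_le hcd, integral_of_le (exp_le_exp.2 hcd), integral_Ioc_eq_integral_Ioo,
    integral_Ioc_eq_integral_Ioo, ← image_exp_Ioo, integral_image_eq_integral_abs_deriv_smul
      measurableSet_Ioo (fun x _ ↦ (hasDerivAt_exp x).hasDerivWithinAt) exp_injective.injOn]
  simp only [abs_of_pos (exp_pos _)]

lemma integral_comp_log_div_div {a t : ℝ} (ha : 0 < a) (hat : a ≤ t) (f : ℝ → ℝ) :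
    ∫ τ in a..t, f (log (τ / a)) / τ = log (t / a) * ∫ u in (0 : ℝ)..1, f (log (t / a) * u) := by
  have ht : 0 < t := ha.trans_le hat
  calc ∫ τ in a..t, f (log (τ / a)) / τ
      = ∫ τ in exp (log a)..exp (log t), f (log (τ / a)) / τ := by rw [exp_log ha, exp_log ht]
    _ = ∫ s in log a..log t, f (s - log a) := by
      rw [← integral_exp_smul_comp_exp (log_le_log ha hat)]
      refine integral_congr fun s _ ↦ ?_
      rw [log_div (exp_pos s).ne' ha.ne', log_exp, smul_eq_mul, mul_div_cancel₀ _ (exp_pos s).ne']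
    _ = ∫ s in (0 : ℝ)..log (t / a), f s := by
      rw [integral_comp_sub_right, sub_self, log_div ht.ne' ha.ne']
    _ = log (t / a) * ∫ u in (0 : ℝ)..1, f (log (t / a) * u) := by
      rw [← smul_eq_mul, smul_integral_comp_mul_left, mul_zero, mul_one]

lemma integral_log_rpow_sub_log_rpow_mul_log_rpow {a t : ℝ} (ha : 0 < a) (hat : a < t)
    (β γ : ℝ) :
    ∫ τ in a..t, (log (t / a) ^ β - log (τ / a) ^ β) / τ * log (t / τ) ^ γ =
      log (t / a) ^ (β + γ + 1) * ∫ u in (0 : ℝ)..1, (1 - u ^ β) * (1 - u) ^ γ := by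
  set L := log (t / a) with hL
  have ht : 0 < t := ha.trans hat
  have hL0 : 0 < L := log_pos ((one_lt_div ha).2 hat)
  have hlog : ∀ τ ∈ uIcc a t, (L ^ β - log (τ / a) ^ β) / τ * log (t / τ) ^ γ =
      (L ^ β - log (τ / a) ^ β) * (L - log (τ / a)) ^ γ / τ := by
    intro τ hτ
    have hτ : 0 < τ := ha.trans_le (uIcc_of_le hat.le ▸ hτ).1
    have hsplit : log (t / τ) = L - log (τ / a) := by
      rw [hL, log_div hτ.ne' ha.ne', log_div ht.ne' ha.ne', log_div ht.ne' hτ.ne']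
      ring
    rw [hsplit, div_mul_eq_mul_div]
  have hscale : ∀ u ∈ uIcc (0 : ℝ) 1, (L ^ β - (L * u) ^ β) * (L - L * u) ^ γ =
      L ^ (β + γ) * ((1 - u ^ β) * (1 - u) ^ γ) := by
    intro u hu
    rw [uIcc_of_le zero_le_one] at hu
    rw [mul_rpow hL0.le hu.1, show L - L * u = L * (1 - u) by ring,
      mul_rpow hL0.le (sub_nonneg.2 hu.2), rpow_add hL0]
    ring
  rw [integral_congr hlog,
    integral_comp_log_div_div ha hat.le (fun s ↦ (L ^ β - s ^ β) * (L - s) ^ γ),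
    integral_congr hscale, intervalIntegral.integral_const_mul, rpow_add_one hL0.ne']
  ring

theorem hadamard_marchaud_of_log_rpow_general
    (a b : ℝ) (ha : 0 < a)
    (α : ℝ → ℝ)
    (hα01 : ∀ t ∈ Set.Icc a b, α t ∈ Set.Ioo (0 : ℝ) 1)
    (β : ℝ) (hβ : -1 < β) :
    ∀ t ∈ Set.Ioc a b,
      hadamardMarchaud a α (fun s => (Real.log (s / a)) ^ β) t =
        (Real.Gamma (β + 1) / Real.Gamma (β - α t + 1)) *
          (Real.log (t / a)) ^ (β - α t) := by
  rintro t ⟨hat, htb⟩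
  have hA : α t < 1 := (hα01 t ⟨hat.le, htb⟩).2
  have hL : 0 < log (t / a) := log_pos ((one_lt_div ha).2 hat)
  have hΓ : Gamma (1 - α t) ≠ 0 := (Gamma_pos_of_pos (by linarith)).ne'
  have hint := integral_log_rpow_sub_log_rpow_mul_log_rpow ha hat β (-α t - 1)
  rw [show β + (-α t - 1) + 1 = β - α t by ring] at hint
  have hpow : log (t / a) ^ β * log (t / a) ^ (-α t) = log (t / a) ^ (β - α t) := by
    rw [← rpow_add hL, sub_eq_add_neg]
  rw [hadamardMarchaud, hint]
  calc _ = log (t / a) ^ (β - α t) / Gamma (1 - α t) *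
        (1 + α t * ∫ u in (0 : ℝ)..1, (1 - u ^ β) * (1 - u) ^ (-α t - 1)) := by
        rw [← hpow]
        ring
    _ = _ := by
      rw [one_add_mul_integral_one_sub_rpow_mul_one_sub_rpow hβ hA]
      field_simp

theorem hadamard_marchaud_of_log_rpow
    (a b : ℝ) (ha : 0 < a) (hab : a < b)
    (α : ℝ → ℝ) (hα : ContDiffOn ℝ 1 α (Set.Icc a b))
    (hα01 : ∀ t ∈ Set.Icc a b, α t ∈ Set.Ioo (0 : ℝ) 1)
    (β : ℝ) (hβ : -1 < β) :
    ∀ t ∈ Set.Ioc a b,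
      hadamardMarchaud a α (fun s => (Real.log (s / a)) ^ β) t =
        (Real.Gamma (β + 1) / Real.Gamma (β - α t + 1)) *
          (Real.log (t / a)) ^ (β - α t) :=
  hadamard_marchaud_of_log_rpow_general a b ha α hα01 β hβ
end

section
/- Let 0 < a < b be reals, let α : [a,b] → (0,1) be continuously differentiable, and let x : [a,b] → ℝ be continuously differentiable. Then for every t ∈ (a,b] the left Hadamard–Marchaud fractional derivative of variable order admits the integration-by-parts representation ${}_a𝔻_t^{α(t)} x(t) = \frac{x(a)}{Γ(1-α(t))}(\ln\frac{t}{a})^{-α(t)} + \frac{1}{Γ(1-α(t))} \int_a^t (\ln\frac{t}{τ})^{-α(t)} x'(τ)\, dτ$. -/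
open Real Set MeasureTheory Filter Topology
open scoped NNReal

namespace HadamardMarchaud

lemma sub_le_mul_log_div {t τ : ℝ} (ht : 0 < t) (hτ : 0 < τ) :
    t - τ ≤ t * log (t / τ) := by
  have h := one_sub_inv_le_log_of_pos (div_pos ht hτ)
  rw [inv_div] at h
  calc t - τ = t * (1 - τ / t) := by field_simp
    _ ≤ t * log (t / τ) := mul_le_mul_of_nonneg_left h ht.le

lemma hasDerivAt_log_div_rpow {t τ : ℝ} (p : ℝ) (hτ : 0 < τ) (hτt : τ < t) :
    HasDerivAt (fun σ => log (t / σ) ^ p) (-p * log (t / τ) ^ (p - 1) / τ) τ := by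
  have hlog : 0 < log (t / τ) := log_pos ((one_lt_div hτ).2 hτt)
  have hdiv : HasDerivAt (fun σ => t / σ) (-t / τ ^ 2) τ := by
    simpa [div_eq_mul_inv, neg_div] using (hasDerivAt_inv hτ.ne').const_mul t
  convert (hdiv.log (div_pos (hτ.trans hτt) hτ).ne').rpow_const (p := p) (Or.inl hlog.ne')
    using 1
  field_simp [(hτ.trans hτt).ne']

lemma continuousOn_log_div_rpow {t p : ℝ} (ht : t ≠ 0) (hp : 0 < p) :
    ContinuousOn (fun τ => log (t / τ) ^ p) (Ioi 0) := fun _ hτ =>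
  (((continuousAt_const.div continuousAt_id (ne_of_gt hτ)).log
    (div_ne_zero ht (ne_of_gt hτ))).rpow_const (Or.inr hp.le)).continuousWithinAt

lemma integrableOn_log_div_rpow_neg_div {a t β : ℝ} (ha : 0 < a) (hβ : β < 1) :
    IntegrableOn (fun τ => log (t / τ) ^ (-β) / τ) (Ioc a t) := by
  rcases le_or_gt t a with hta | hat
  · simp [Ioc_eq_empty_of_le hta]
  refine intervalIntegral.integrableOn_deriv_of_nonneg
    (g := fun τ => -(log (t / τ) ^ (1 - β) / (1 - β)))
    (((continuousOn_log_div_rpow (ha.trans hat).ne' (sub_pos.2 hβ)).mono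
      fun _ hτ => ha.trans_le hτ.1).div_const _).neg (fun τ hτ => ?_) (fun τ hτ => ?_)
  · refine ((hasDerivAt_log_div_rpow (1 - β) (ha.trans hτ.1) hτ.2).div_const (1 - β)).neg
      |>.congr_deriv ?_
    rw [sub_sub_cancel_left]
    field_simp [(sub_pos.2 hβ).ne']
  · have := log_nonneg ((one_le_div (ha.trans hτ.1)).2 hτ.2.le)
    have := ha.trans hτ.1
    positivity

lemma intervalIntegrable_of_abs_le_log_div_rpow_neg_div {a t β C : ℝ} {f : ℝ → ℝ}
    (ha : 0 < a) (hat : a ≤ t) (hβ : β < 1)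
    (hf : AEStronglyMeasurable f (volume.restrict (Ioo a t)))
    (hle : ∀ τ ∈ Ioo a t, |f τ| ≤ C * (log (t / τ) ^ (-β) / τ)) :
    IntervalIntegrable f volume a t := by
  rw [intervalIntegrable_iff_integrableOn_Ioo_of_le hat]
  refine (((integrableOn_log_div_rpow_neg_div ha hβ).mono_set Ioo_subset_Ioc_self).const_mul C
    |>.mono' hf ?_)
  filter_upwards [ae_restrict_mem measurableSet_Ioo] with τ hτ
  exact hle τ hτ

section Lipschitz

variable {a t β : ℝ} {x : ℝ → ℝ} {K : ℝ≥0}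

lemma abs_sub_le_mul_log_div (ha : 0 < a) (hK : LipschitzOnWith K x (Icc a t)) {τ : ℝ}
    (hτ : τ ∈ Icc a t) : |x t - x τ| ≤ K * t * log (t / τ) := by
  have hat : a ≤ t := hτ.1.trans hτ.2
  have h := hK.dist_le_mul t ⟨hat, le_rfl⟩ τ hτ
  rw [Real.dist_eq, Real.dist_eq, abs_of_nonneg (sub_nonneg.2 hτ.2)] at h
  calc |x t - x τ| ≤ K * (t - τ) := h
    _ ≤ K * (t * log (t / τ)) :=
      mul_le_mul_of_nonneg_left (sub_le_mul_log_div (ha.trans_le hat) (ha.trans_le hτ.1)) K.2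
    _ = K * t * log (t / τ) := by ring

lemma abs_sub_mul_log_div_rpow_le (ha : 0 < a) (hβ : β < 1) (hK : LipschitzOnWith K x (Icc a t))
    {τ : ℝ} (hτ : τ ∈ Icc a t) :
    |(x t - x τ) * log (t / τ) ^ (-β)| ≤ K * t * log (t / τ) ^ (1 - β) := by
  have hlog := log_nonneg ((one_le_div (ha.trans_le hτ.1)).2 hτ.2)
  rw [abs_mul, abs_of_nonneg (rpow_nonneg hlog _), sub_eq_add_neg (1 : ℝ),
    rpow_add' hlog (by linarith), rpow_one, ← mul_assoc]
  exact mul_le_mul_of_nonneg_right (abs_sub_le_mul_log_div ha hK hτ) (rpow_nonneg hlog _)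

lemma continuousOn_sub_mul_log_div_rpow (ha : 0 < a) (hβ : β < 1)
    (hK : LipschitzOnWith K x (Icc a t)) :
    ContinuousOn (fun τ => (x t - x τ) * log (t / τ) ^ (-β)) (Icc a t) := by
  intro τ hτ
  rcases hτ.2.lt_or_eq with hlt | rfl
  · exact (continuousWithinAt_const.sub (hK.continuousOn τ hτ)).mul
      (hasDerivAt_log_div_rpow (-β) (ha.trans_le hτ.1) hlt).continuousAt.continuousWithinAt
  · have hbound : Tendsto (fun σ => (K : ℝ) * τ * log (τ / σ) ^ (1 - β)) (𝓝[Icc a τ] τ)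
        (𝓝 0) := by
      have h := ((continuousOn_log_div_rpow (ha.trans_le hτ.1).ne' (sub_pos.2 hβ)).mono
        fun _ hσ => ha.trans_le hσ.1) τ hτ
      simpa [ContinuousWithinAt, zero_rpow (sub_pos.2 hβ).ne'] using h.const_mul ((K : ℝ) * τ)
    simpa [ContinuousWithinAt] using squeeze_zero_norm'
      (eventually_nhdsWithin_of_forall fun σ hσ => abs_sub_mul_log_div_rpow_le ha hβ hK hσ)
      hbound

lemma intervalIntegrable_marchaud_integrand (ha : 0 < a) (hat : a ≤ t) (hβ : β < 1)
    (hK : LipschitzOnWith K x (Icc a t)) :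
    IntervalIntegrable (fun τ => (x t - x τ) / τ * log (t / τ) ^ (-β - 1)) volume a t := by
  have hx : AEStronglyMeasurable x (volume.restrict (Ioo a t)) :=
    (hK.continuousOn.mono Ioo_subset_Icc_self).aestronglyMeasurable measurableSet_Ioo
  refine intervalIntegrable_of_abs_le_log_div_rpow_neg_div ha hat hβ
    (((aestronglyMeasurable_const.sub hx).div₀ measurable_id.aestronglyMeasurable).mul
      (by fun_prop : Measurable fun τ => log (t / τ) ^ (-β - 1)).aestronglyMeasurable)
    (C := K * t) fun τ hτ => ?_
  have hτ0 : 0 < τ := ha.trans hτ.1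
  have hlog : 0 < log (t / τ) := log_pos ((one_lt_div hτ0).2 hτ.2)
  have hsplit : log (t / τ) ^ (-β) = log (t / τ) * log (t / τ) ^ (-β - 1) := by
    rw [mul_comm, ← rpow_add_one hlog.ne', sub_add_cancel]
  rw [abs_mul, abs_div, abs_of_pos hτ0, abs_of_nonneg (rpow_nonneg hlog.le _), hsplit]
  calc |x t - x τ| / τ * log (t / τ) ^ (-β - 1)
      ≤ K * t * log (t / τ) / τ * log (t / τ) ^ (-β - 1) := by
        gcongr
        exact abs_sub_le_mul_log_div ha hK (Ioo_subset_Icc_self hτ)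
    _ = K * t * (log (t / τ) * log (t / τ) ^ (-β - 1) / τ) := by ring

lemma intervalIntegrable_log_div_rpow_mul_deriv (ha : 0 < a) (hat : a ≤ t) (hβ : β < 1)
    (hK : LipschitzOnWith K x (Icc a t)) :
    IntervalIntegrable (fun τ => log (t / τ) ^ (-β) * deriv x τ) volume a t := by
  refine intervalIntegrable_of_abs_le_log_div_rpow_neg_div ha hat hβ
    ((by fun_prop : Measurable fun τ => log (t / τ) ^ (-β)).mul
      (measurable_deriv x)).aestronglyMeasurable (C := K * t) fun τ hτ => ?_
  have hτ0 : 0 < τ := ha.trans hτ.1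
  have hpow : 0 ≤ log (t / τ) ^ (-β) :=
    rpow_nonneg (log_nonneg ((one_le_div hτ0).2 hτ.2.le)) _
  have hderiv : |deriv x τ| ≤ K := by
    simpa using norm_deriv_le_of_lipschitzOn (Icc_mem_nhds hτ.1 hτ.2) hK
  rw [abs_mul, abs_of_nonneg hpow]
  calc log (t / τ) ^ (-β) * |deriv x τ| ≤ τ * (log (t / τ) ^ (-β) / τ) * K := by
        rw [mul_div_cancel₀ _ hτ0.ne']
        gcongr
    _ ≤ t * (log (t / τ) ^ (-β) / τ) * K := by gcongr; exact hτ.2.le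
    _ = K * t * (log (t / τ) ^ (-β) / τ) := by ring

theorem mul_integral_marchaud_integrand_eq (ha : 0 < a) (hat : a ≤ t) (hβ : β < 1)
    (hK : LipschitzOnWith K x (Icc a t)) (hx : DifferentiableOn ℝ x (Ioo a t)) :
    β * ∫ τ in a..t, (x t - x τ) / τ * log (t / τ) ^ (-β - 1) =
      (∫ τ in a..t, log (t / τ) ^ (-β) * deriv x τ) - (x t - x a) * log (t / a) ^ (-β) := by
  have hderiv : ∀ τ ∈ Ioo a t, HasDerivAt (fun σ => (x t - x σ) * log (t / σ) ^ (-β))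
      (-(log (t / τ) ^ (-β) * deriv x τ) +
        β * ((x t - x τ) / τ * log (t / τ) ^ (-β - 1))) τ := fun τ hτ => by
    refine ((hasDerivAt_const τ (x t)).sub
      (hx.differentiableAt (Ioo_mem_nhds hτ.1 hτ.2)).hasDerivAt).mul
      (hasDerivAt_log_div_rpow (-β) (ha.trans hτ.1) hτ.2) |>.congr_deriv ?_
    simp only [Pi.sub_apply]
    ring
  have hJ := intervalIntegrable_log_div_rpow_mul_deriv ha hat hβ hK
  have hJneg : IntervalIntegrable (fun τ => -(log (t / τ) ^ (-β) * deriv x τ)) volume a t :=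
    hJ.neg
  have hI := intervalIntegrable_marchaud_integrand ha hat hβ hK
  have hFTC := intervalIntegral.integral_eq_sub_of_hasDerivAt_of_le hat
    (continuousOn_sub_mul_log_div_rpow ha hβ hK) hderiv (hJneg.add (hI.const_mul β))
  rw [intervalIntegral.integral_add hJneg (hI.const_mul β), intervalIntegral.integral_neg,
    intervalIntegral.integral_const_mul, sub_self, zero_mul] at hFTC
  linarith

end Lipschitz

end HadamardMarchaud

theorem hadamard_marchaud_parts_repr_general
    (a b : ℝ) (ha : 0 < a)
    (α : ℝ → ℝ)
    (hα01 : ∀ t ∈ Set.Icc a b, α t ∈ Set.Ioo (0 : ℝ) 1)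
    (x : ℝ → ℝ) (hx : ContDiffOn ℝ 1 x (Set.Icc a b)) :
    ∀ t ∈ Set.Ioc a b,
      hadamardMarchaud a α x t =
        (x a / Real.Gamma (1 - α t)) * (Real.log (t / a)) ^ (-(α t)) +
        (1 / Real.Gamma (1 - α t)) *
          ∫ τ in a..t, (Real.log (t / τ)) ^ (-(α t)) * deriv x τ := by
  rintro t ⟨hat, htb⟩
  have hxt : ContDiffOn ℝ 1 x (Icc a t) := hx.mono (Icc_subset_Icc_right htb)
  obtain ⟨K, hK⟩ := hxt.exists_lipschitzOnWith one_ne_zero (convex_Icc a t) isCompact_Icc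
  have hparts := HadamardMarchaud.mul_integral_marchaud_integrand_eq ha hat.le
    (hα01 t ⟨hat.le, htb⟩).2 hK ((hxt.differentiableOn one_ne_zero).mono Ioo_subset_Icc_self)
  rw [hadamardMarchaud]
  linear_combination (1 / Real.Gamma (1 - α t)) * hparts

theorem hadamard_marchaud_parts_repr
    (a b : ℝ) (ha : 0 < a) (hab : a < b)
    (α : ℝ → ℝ) (hα : ContDiffOn ℝ 1 α (Set.Icc a b))
    (hα01 : ∀ t ∈ Set.Icc a b, α t ∈ Set.Ioo (0 : ℝ) 1)
    (x : ℝ → ℝ) (hx : ContDiffOn ℝ 1 x (Set.Icc a b)) :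
    ∀ t ∈ Set.Ioc a b,
      hadamardMarchaud a α x t =
        (x a / Real.Gamma (1 - α t)) * (Real.log (t / a)) ^ (-(α t)) +
        (1 / Real.Gamma (1 - α t)) *
          ∫ τ in a..t, (Real.log (t / τ)) ^ (-(α t)) * deriv x τ :=
  hadamard_marchaud_parts_repr_general a b ha α hα01 x hx
end

section
/- Let 0 < a < b be reals, let α : [a,b] → (0,1) be continuously differentiable, and let x : [a,b] → ℝ be continuously differentiable. Then for every t ∈ [a,b) the right Hadamard–Marchaud fractional derivative of variable order admits the integration-by-parts representation ${}_t𝔻_b^{α(t)} x(t) = \frac{x(b)}{Γ(1-α(t))}(\ln\frac{b}{t})^{-α(t)} - \frac{1}{Γ(1-α(t))} \int_t^b (\ln\frac{τ}{t})^{-α(t)} x'(τ)\, dτ$. -/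
/-- The right Hadamard–Marchaud fractional derivative of variable order `α t`. -/
noncomputable def hadamardMarchaudRight (b : ℝ) (α : ℝ → ℝ) (x : ℝ → ℝ) (t : ℝ) : ℝ :=
  (x t / Real.Gamma (1 - α t)) * (Real.log (b / t)) ^ (-(α t)) +
  (α t / Real.Gamma (1 - α t)) *
    ∫ τ in t..b, ((x t - x τ) / τ) * (Real.log (τ / t)) ^ (-(α t) - 1)

/-!
Integrate by parts against `F τ = (x τ - x t) * (log (τ / t)) ^ (-α t)`. On `(t, b)` its derivative
is `x'` against the kernel `(log (τ / t)) ^ (-α t)` plus `α t` times the Marchaud integrand. Since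
`x` is `K`-Lipschitz and `τ - t ≤ τ log (τ / t)`, we get `|F τ| ≤ K b (log (τ / t)) ^ (1 - α t)`, so
`F t = 0` with `F` continuous there, and both integrands are dominated by multiples of
`(log (τ / t)) ^ (-α t) ≤ b ^ (α t) (τ - t) ^ (-α t)`, which is integrable because `α t < 1`.
-/

open Set MeasureTheory Real

lemma sub_le_mul_log_div {t τ : ℝ} (ht : 0 < t) (htτ : t ≤ τ) : τ - t ≤ τ * log (τ / t) := by
  have hτ : 0 < τ := ht.trans_le htτ
  calc τ - t = τ * (1 - (τ / t)⁻¹) := by field_simp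
    _ ≤ τ * log (τ / t) := by gcongr; exact one_sub_inv_le_log_of_pos (by positivity)

lemma log_div_rpow_le_mul_sub_rpow {t τ b c : ℝ} (ht : 0 < t) (htτ : t < τ) (hτb : τ ≤ b)
    (hc : c ≤ 0) : log (τ / t) ^ c ≤ b ^ (-c) * (τ - t) ^ c := by
  have hτ : 0 < τ := ht.trans htτ
  have hlower : (τ - t) / b ≤ log (τ / t) :=
    calc (τ - t) / b ≤ (τ - t) / τ := by gcongr
      _ ≤ log (τ / t) := by rw [div_le_iff₀ hτ, mul_comm]; exact sub_le_mul_log_div ht htτ.le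
  calc log (τ / t) ^ c ≤ ((τ - t) / b) ^ c :=
        rpow_le_rpow_of_nonpos (div_pos (by linarith) (by linarith)) hlower hc
    _ = b ^ (-c) * (τ - t) ^ c := by
        rw [div_rpow (by linarith) (by linarith), rpow_neg (by linarith)]
        ring

lemma intervalIntegrable_log_div_rpow {t b c : ℝ} (ht : 0 < t) (htb : t ≤ b) (hc0 : c ≤ 0)
    (hc1 : -1 < c) : IntervalIntegrable (fun τ ↦ log (τ / t) ^ c) volume t b := by
  have hmaj : IntervalIntegrable (fun τ ↦ b ^ (-c) * (τ - t) ^ c) volume t b := by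
    have := (intervalIntegral.intervalIntegrable_rpow' hc1 (a := 0) (b := b - t)).comp_sub_right t
    rw [zero_add, sub_add_cancel] at this
    exact this.const_mul _
  rw [intervalIntegrable_iff_integrableOn_Ioo_of_le htb] at hmaj ⊢
  refine hmaj.mono' (by fun_prop : Measurable _).aestronglyMeasurable ?_
  filter_upwards [ae_restrict_mem measurableSet_Ioo] with τ hτ
  rw [norm_of_nonneg (rpow_nonneg (log_nonneg ((one_le_div ht).2 hτ.1.le)) _)]
  exact log_div_rpow_le_mul_sub_rpow ht hτ.1 hτ.2.le hc0

section
variable {x : ℝ → ℝ} {K : NNReal} {t b A : ℝ}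

lemma LipschitzOnWith.abs_sub_le_mul_log_div (hx : LipschitzOnWith K x (Icc t b)) (ht : 0 < t)
    {τ : ℝ} (hτ : τ ∈ Icc t b) : |x τ - x t| ≤ K * b * log (τ / t) := by
  have hlog : 0 ≤ log (τ / t) := log_nonneg ((one_le_div ht).2 hτ.1)
  calc |x τ - x t| ≤ K * (τ - t) := by
        simpa [Real.dist_eq, abs_of_nonneg (sub_nonneg.2 hτ.1)] using
          hx.dist_le_mul τ hτ t (left_mem_Icc.2 (hτ.1.trans hτ.2))
    _ ≤ K * (τ * log (τ / t)) := by gcongr; exact sub_le_mul_log_div ht hτ.1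
    _ ≤ K * b * log (τ / t) := by rw [← mul_assoc]; gcongr; exact hτ.2

lemma LipschitzOnWith.continuousOn_sub_mul_log_div_rpow (hx : LipschitzOnWith K x (Icc t b))
    (ht : 0 < t) (hA : A < 1) :
    ContinuousOn (fun τ ↦ (x τ - x t) * log (τ / t) ^ (-A)) (Icc t b) := by
  intro τ hτ
  rcases hτ.1.eq_or_lt with rfl | htτ
  · have hbound : ∀ σ ∈ Icc t b, ‖(x σ - x t) * log (σ / t) ^ (-A)‖ ≤
        K * b * log (σ / t) ^ (1 - A) := by
      intro σ hσ
      have hlog : 0 ≤ log (σ / t) := log_nonneg ((one_le_div ht).2 hσ.1)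
      rw [norm_mul, norm_of_nonneg (rpow_nonneg hlog _), Real.norm_eq_abs,
        show 1 - A = 1 + -A by ring, rpow_add' hlog (by linarith), rpow_one, ← mul_assoc]
      gcongr
      exact hx.abs_sub_le_mul_log_div ht hσ
    have hlim : ContinuousAt (fun σ ↦ K * b * log (σ / t) ^ (1 - A)) t :=
      continuousAt_const.mul
        (((continuousAt_id.div_const t).log (by simp [ht.ne'])).rpow_const (Or.inr (by linarith)))
    have hzero : K * b * log (t / t) ^ (1 - A) = 0 := by
      rw [div_self ht.ne', log_one, zero_rpow (by linarith), mul_zero]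
    rw [ContinuousWithinAt, sub_self, zero_mul]
    refine squeeze_zero_norm' (eventually_nhdsWithin_of_forall hbound) ?_
    simpa only [hzero] using hlim.continuousWithinAt.tendsto
  · have hlog : 0 < log (τ / t) := log_pos ((one_lt_div ht).2 htτ)
    exact ((hx.continuousOn τ hτ).sub continuousWithinAt_const).mul
      (((continuousAt_id.div_const t).log (div_pos (ht.trans htτ) ht).ne').rpow_const
        (Or.inl hlog.ne')).continuousWithinAt

lemma hasDerivAt_sub_mul_log_div_rpow (ht : 0 < t) {τ x' : ℝ} (htτ : t < τ)
    (hx : HasDerivAt x x' τ) :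
    HasDerivAt (fun σ ↦ (x σ - x t) * log (σ / t) ^ (-A))
      (log (τ / t) ^ (-A) * x' + A * ((x t - x τ) / τ * log (τ / t) ^ (-A - 1))) τ := by
  have hτ : 0 < τ := ht.trans htτ
  have hlog : HasDerivAt (fun σ ↦ log (σ / t)) τ⁻¹ τ := by
    convert ((hasDerivAt_id' τ).div_const t).log (div_pos hτ ht).ne' using 1
    field_simp
  have hpow := hlog.rpow_const (p := -A) (Or.inl (log_pos ((one_lt_div ht).2 htτ)).ne')
  refine ((hx.sub_const (x t)).mul hpow).congr_deriv ?_
  field_simp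
  ring

lemma LipschitzOnWith.intervalIntegrable_log_div_rpow_mul_deriv
    (hx : LipschitzOnWith K x (Icc t b)) (ht : 0 < t) (htb : t ≤ b) (hA0 : 0 ≤ A) (hA1 : A < 1) :
    IntervalIntegrable (fun τ ↦ log (τ / t) ^ (-A) * deriv x τ) volume t b := by
  have hmaj := (intervalIntegrable_log_div_rpow ht htb (neg_nonpos.2 hA0) (by linarith)).mul_const K
  rw [intervalIntegrable_iff_integrableOn_Ioo_of_le htb] at hmaj ⊢
  refine hmaj.mono' ((by fun_prop : Measurable _).mul (measurable_deriv x)).aestronglyMeasurable ?_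
  filter_upwards [ae_restrict_mem measurableSet_Ioo] with τ hτ
  have hkernel : 0 ≤ log (τ / t) ^ (-A) := rpow_nonneg (log_nonneg ((one_le_div ht).2 hτ.1.le)) _
  rw [norm_mul, norm_of_nonneg hkernel]
  exact mul_le_mul_of_nonneg_left
    (norm_deriv_le_of_lipschitzOn (Icc_mem_nhds hτ.1 hτ.2) hx) hkernel

lemma LipschitzOnWith.intervalIntegrable_sub_div_mul_log_div_rpow
    (hx : LipschitzOnWith K x (Icc t b)) (ht : 0 < t) (htb : t ≤ b) (hA0 : 0 ≤ A) (hA1 : A < 1) :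
    IntervalIntegrable (fun τ ↦ (x t - x τ) / τ * log (τ / t) ^ (-A - 1)) volume t b := by
  have hmaj := (intervalIntegrable_log_div_rpow ht htb (neg_nonpos.2 hA0) (by linarith)).const_mul
    (K * b / t)
  rw [intervalIntegrable_iff_integrableOn_Ioo_of_le htb] at hmaj ⊢
  have hcont : ContinuousOn (fun τ ↦ (x t - x τ) / τ * log (τ / t) ^ (-A - 1)) (Ioo t b) := by
    intro τ hτ
    have hτ0 : 0 < τ := ht.trans hτ.1
    exact ((continuousWithinAt_const.sub (hx.continuousOn.mono Ioo_subset_Icc_self τ hτ)).div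
      continuousWithinAt_id hτ0.ne').mul
      (((continuousAt_id.div_const t).log (div_pos hτ0 ht).ne').rpow_const
        (Or.inl (log_pos ((one_lt_div ht).2 hτ.1)).ne')).continuousWithinAt
  refine hmaj.mono' (hcont.aestronglyMeasurable measurableSet_Ioo) ?_
  filter_upwards [ae_restrict_mem measurableSet_Ioo] with τ hτ
  have hτ0 : 0 < τ := ht.trans hτ.1
  have hb : 0 < b := hτ0.trans hτ.2
  have hlog : 0 < log (τ / t) := log_pos ((one_lt_div ht).2 hτ.1)
  have hdiff : |x t - x τ| ≤ K * b * log (τ / t) := by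
    rw [abs_sub_comm]; exact hx.abs_sub_le_mul_log_div ht (Ioo_subset_Icc_self hτ)
  calc ‖(x t - x τ) / τ * log (τ / t) ^ (-A - 1)‖
      = |x t - x τ| / τ * log (τ / t) ^ (-A - 1) := by
        rw [norm_mul, norm_of_nonneg (rpow_nonneg hlog.le _), Real.norm_eq_abs, abs_div,
          abs_of_pos hτ0]
    _ ≤ K * b * log (τ / t) / t * log (τ / t) ^ (-A - 1) := by
        gcongr
        exact hτ.1.le
    _ = K * b / t * (log (τ / t) ^ (-A - 1) * log (τ / t)) := by ring
    _ = K * b / t * log (τ / t) ^ (-A) := by rw [← rpow_add_one hlog.ne', sub_add_cancel]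

lemma LipschitzOnWith.integral_log_div_rpow_mul_deriv_add (hx : LipschitzOnWith K x (Icc t b))
    (hxd : DifferentiableOn ℝ x (Ioo t b)) (ht : 0 < t) (htb : t ≤ b) (hA0 : 0 ≤ A) (hA1 : A < 1) :
    (∫ τ in t..b, log (τ / t) ^ (-A) * deriv x τ) +
        A * ∫ τ in t..b, (x t - x τ) / τ * log (τ / t) ^ (-A - 1) =
      (x b - x t) * log (b / t) ^ (-A) := by
  have hI₁ := hx.intervalIntegrable_log_div_rpow_mul_deriv ht htb hA0 hA1
  have hI₂ := hx.intervalIntegrable_sub_div_mul_log_div_rpow ht htb hA0 hA1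
  have hFTC := intervalIntegral.integral_eq_sub_of_hasDeriv_right_of_le htb
    (hx.continuousOn_sub_mul_log_div_rpow ht hA1)
    (fun τ hτ ↦ (hasDerivAt_sub_mul_log_div_rpow ht hτ.1
      ((hxd τ hτ).differentiableAt (isOpen_Ioo.mem_nhds hτ)).hasDerivAt).hasDerivWithinAt)
    (hI₁.add (hI₂.const_mul A))
  rw [← intervalIntegral.integral_const_mul, ← intervalIntegral.integral_add hI₁ (hI₂.const_mul A),
    hFTC, sub_self, zero_mul, sub_zero]

end

theorem hadamard_marchaud_right_parts_repr_general
    (a b : ℝ) (ha : 0 < a)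
    (α : ℝ → ℝ)
    (hα01 : ∀ t ∈ Set.Icc a b, α t ∈ Set.Ioo (0 : ℝ) 1)
    (x : ℝ → ℝ) (hx : ContDiffOn ℝ 1 x (Set.Icc a b)) :
    ∀ t ∈ Set.Ico a b,
      hadamardMarchaudRight b α x t =
        (x b / Real.Gamma (1 - α t)) * (Real.log (b / t)) ^ (-(α t)) -
        (1 / Real.Gamma (1 - α t)) *
          ∫ τ in t..b, (Real.log (τ / t)) ^ (-(α t)) * deriv x τ := by
  rintro t ⟨hat, htb⟩
  obtain ⟨hα0, hα1⟩ := hα01 t ⟨hat, htb.le⟩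
  have hxt : ContDiffOn ℝ 1 x (Icc t b) := hx.mono (Icc_subset_Icc_left hat)
  obtain ⟨K, hK⟩ := hxt.exists_lipschitzOnWith one_ne_zero (convex_Icc t b) isCompact_Icc
  have hparts := hK.integral_log_div_rpow_mul_deriv_add
    ((hxt.mono Ioo_subset_Icc_self).differentiableOn one_ne_zero) (ha.trans_le hat) htb.le
    hα0.le hα1
  rw [hadamardMarchaudRight]
  linear_combination (1 / Real.Gamma (1 - α t)) * hparts

theorem hadamard_marchaud_right_parts_repr
    (a b : ℝ) (ha : 0 < a) (hab : a < b)
    (α : ℝ → ℝ) (hα : ContDiffOn ℝ 1 α (Set.Icc a b))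
    (hα01 : ∀ t ∈ Set.Icc a b, α t ∈ Set.Ioo (0 : ℝ) 1)
    (x : ℝ → ℝ) (hx : ContDiffOn ℝ 1 x (Set.Icc a b)) :
    ∀ t ∈ Set.Ico a b,
      hadamardMarchaudRight b α x t =
        (x b / Real.Gamma (1 - α t)) * (Real.log (b / t)) ^ (-(α t)) -
        (1 / Real.Gamma (1 - α t)) *
          ∫ τ in t..b, (Real.log (τ / t)) ^ (-(α t)) * deriv x τ :=
  hadamard_marchaud_right_parts_repr_general a b ha α hα01 x hx
end

section
/- Let 0 < a < t be reals and let k ≥ 0 be an integer. Then $\int_a^t \frac{(\ln\frac{τ}{a})^{k+1}}{(\ln\frac{t}{a})^{k}}\, dτ \le \frac{(2t-a)(\ln\frac{t}{a})^{2}}{k+2}$. -/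
open Real intervalIntegral

/- With `L = log (t / a)`, the substitution `u = log (τ / a)` gives
`∫ₐᵗ log (τ / a) ^ (k + 1) / τ dτ = L ^ (k + 2) / (k + 2)`. Since `τ ≤ t` on `[a, t]`, the
integrand of the theorem is at most `t` times this one, so the integral is at most
`t L ^ 2 / (k + 2)`, and `t ≤ 2 t - a`. -/

theorem hasDerivAt_log_div_pow_div {a x : ℝ} (ha : a ≠ 0) (hx : x ≠ 0) (n : ℕ) :
    HasDerivAt (fun x ↦ log (x / a) ^ (n + 1) / (n + 1)) (log (x / a) ^ n / x) x := by
  have hlog : HasDerivAt (fun x ↦ log (x / a)) x⁻¹ x :=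
    ((hasDerivAt_id' x).div_const a).log (div_ne_zero hx ha) |>.congr_deriv (by field_simp)
  refine (hlog.pow (n + 1)).div_const ((n : ℝ) + 1) |>.congr_deriv ?_
  rw [add_tsub_cancel_right]
  push_cast
  field_simp

theorem continuousOn_log_div_pow {a : ℝ} {s : Set ℝ} (ha : a ≠ 0) (hs : ∀ x ∈ s, x ≠ 0)
    (n : ℕ) : ContinuousOn (fun τ ↦ log (τ / a) ^ n) s :=
  ((continuousOn_id.div_const a).log fun x hx ↦ div_ne_zero (hs x hx) ha).pow n

theorem integral_log_div_pow_div {a t : ℝ} (ha : 0 < a) (ht : 0 < t) (n : ℕ) :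
    ∫ τ in a..t, log (τ / a) ^ n / τ = log (t / a) ^ (n + 1) / (n + 1) := by
  have hne : ∀ x ∈ Set.uIcc a t, x ≠ 0 := fun x hx ↦
    (lt_of_lt_of_le (lt_min ha ht) hx.1).ne'
  have hcont : ContinuousOn (fun τ ↦ log (τ / a) ^ n / τ) (Set.uIcc a t) :=
    (continuousOn_log_div_pow ha.ne' hne n).div continuousOn_id hne
  rw [integral_eq_sub_of_hasDerivAt
    (fun x hx ↦ hasDerivAt_log_div_pow_div ha.ne' (hne x hx) n) hcont.intervalIntegrable]
  simp [div_self ha.ne']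

theorem integral_log_div_pow_le {a t : ℝ} (ha : 0 < a) (hat : a ≤ t) (n : ℕ) :
    ∫ τ in a..t, log (τ / a) ^ n ≤ t * (log (t / a) ^ (n + 1) / (n + 1)) := by
  have hne : ∀ x ∈ Set.uIcc a t, x ≠ 0 := fun x hx ↦
    (ha.trans_le (Set.uIcc_of_le hat ▸ hx).1).ne'
  have hcont := continuousOn_log_div_pow ha.ne' hne n
  have hcont' : ContinuousOn (fun τ ↦ t * (log (τ / a) ^ n / τ)) (Set.uIcc a t) :=
    continuousOn_const.mul (hcont.div continuousOn_id hne)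
  rw [← integral_log_div_pow_div ha (ha.trans_le hat), ← integral_const_mul]
  refine integral_mono_on hat hcont.intervalIntegrable hcont'.intervalIntegrable fun x hx ↦ ?_
  have hlog : 0 ≤ log (x / a) ^ n := pow_nonneg (log_nonneg ((one_le_div ha).2 hx.1)) n
  rw [mul_div_assoc', le_div_iff₀ (ha.trans_le hx.1)]
  exact mul_le_mul_of_nonneg_left hx.2 hlog |>.trans_eq (mul_comm _ _)

theorem integral_log_pow_le
    (a t : ℝ) (ha : 0 < a) (hat : a < t) (k : ℕ) :
    (∫ τ in a..t, (Real.log (τ / a)) ^ (k + 1) / (Real.log (t / a)) ^ k) ≤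
      (2 * t - a) * (Real.log (t / a)) ^ 2 / ((k : ℝ) + 2) := by
  set L := log (t / a)
  have hL : 0 < L := log_pos ((one_lt_div ha).2 hat)
  rw [integral_div, div_le_iff₀ (pow_pos hL k)]
  calc ∫ τ in a..t, log (τ / a) ^ (k + 1)
      ≤ t * (L ^ (k + 1 + 1) / ((k + 1 : ℕ) + 1)) := integral_log_div_pow_le ha hat.le (k + 1)
    _ = t * L ^ 2 / (k + 2) * L ^ k := by push_cast; ring
    _ ≤ (2 * t - a) * L ^ 2 / (k + 2) * L ^ k := by gcongr; linarith
end

section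
/- Let α ∈ (0,1) and let N ≥ 1 be a real number. Then $\int_N^{\infty}\int_N^{\infty} \frac{dp\, dk}{k^{1-α}\, p\, (k+p+1)(k+p+2)} < \frac{1}{(1-α)N^{2-α}}$. -/
/-!
Since `4kp ≤ (k + p + 1)(k + p + 2)`, the integrand is at most `k^(α-2) p^(-2) / 4`, which
separates; the two one-variable integrals are `N^(α-1) / (1 - α)` and `N^(-1)`, so the double
integral is at most a quarter of the right-hand side.
-/

open MeasureTheory Set

lemma four_mul_le_add_add_one_mul_add_add_two {k p : ℝ} (hkp : 0 ≤ k + p) :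
    4 * (k * p) ≤ (k + p + 1) * (k + p + 2) := by
  nlinarith [sq_nonneg (k - p)]

lemma one_div_rpow_mul_le {k p : ℝ} (hk : 0 < k) (hp : 0 < p) (α : ℝ) :
    1 / (k ^ (1 - α) * p * (k + p + 1) * (k + p + 2)) ≤ 1 / 4 * k ^ (α - 2) * p ^ (-2 : ℝ) := by
  have hrhs : 1 / 4 * k ^ (α - 2) * p ^ (-2 : ℝ) = 1 / (k ^ (1 - α) * p * (4 * (k * p))) := by
    rw [show α - 2 = -(1 - α) - 1 by ring, Real.rpow_sub hk, Real.rpow_neg hk.le, Real.rpow_one,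
      Real.rpow_neg hp.le, show (2 : ℝ) = (2 : ℕ) by norm_num, Real.rpow_natCast]
    field_simp
  rw [hrhs, mul_assoc _ (k + p + 1)]
  refine one_div_le_one_div_of_le (by positivity) (mul_le_mul_of_nonneg_left ?_ (by positivity))
  exact four_mul_le_add_add_one_mul_add_add_two (by positivity)

lemma integral_integral_le_integral_mul_integral {X Y : Type*} [MeasurableSpace X]
    [MeasurableSpace Y] {μ : Measure X} {ν : Measure Y} {f : X → Y → ℝ} {g : X → ℝ} {h : Y → ℝ}
    (hf : ∀ᵐ x ∂μ, ∀ᵐ y ∂ν, 0 ≤ f x y) (hfgh : ∀ᵐ x ∂μ, ∀ᵐ y ∂ν, f x y ≤ g x * h y)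
    (hg : Integrable g μ) (hh : Integrable h ν) :
    ∫ x, ∫ y, f x y ∂ν ∂μ ≤ (∫ x, g x ∂μ) * ∫ y, h y ∂ν := by
  rw [← integral_mul_const]
  refine integral_mono_of_nonneg ?_ (hg.mul_const _) ?_
  · filter_upwards [hf] with x hfx using integral_nonneg_of_ae hfx
  · filter_upwards [hf, hfgh] with x hfx hfghx
    rw [← integral_const_mul]
    exact integral_mono_of_nonneg hfx (hh.const_mul _) hfghx

lemma integral_Ioi_rpow_sub_two {α c : ℝ} (hα : α < 1) (hc : 0 < c) :
    ∫ x in Ioi c, x ^ (α - 2) = c ^ (α - 1) / (1 - α) := by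
  rw [integral_Ioi_rpow_of_lt (by linarith) hc, show α - 2 + 1 = α - 1 by ring, ← neg_div_neg_eq,
    neg_neg, neg_sub]

theorem double_integral_Ioi_lt
    (α : ℝ) (hα : α ∈ Set.Ioo (0 : ℝ) 1) (N : ℝ) (hN : 1 ≤ N) :
    (∫ k in Set.Ioi N, ∫ p in Set.Ioi N,
        1 / (k ^ (1 - α) * p * (k + p + 1) * (k + p + 2))) <
      1 / ((1 - α) * N ^ (2 - α)) := by
  have hN0 : 0 < N := by linarith
  have h1α : 0 < 1 - α := by linarith [hα.2]
  have hae {P : ℝ → ℝ → Prop} (hP : ∀ k p, 0 < k → 0 < p → P k p) :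
      ∀ᵐ k ∂volume.restrict (Ioi N), ∀ᵐ p ∂volume.restrict (Ioi N), P k p :=
    ae_restrict_of_forall_mem measurableSet_Ioi fun k hk ↦
      ae_restrict_of_forall_mem measurableSet_Ioi fun p hp ↦ hP k p (hN0.trans hk) (hN0.trans hp)
  calc (∫ k in Ioi N, ∫ p in Ioi N, 1 / (k ^ (1 - α) * p * (k + p + 1) * (k + p + 2)))
      ≤ (∫ k in Ioi N, 1 / 4 * k ^ (α - 2)) * ∫ p in Ioi N, p ^ (-2 : ℝ) :=
        integral_integral_le_integral_mul_integral (hae fun k p hk hp ↦ by positivity)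
          (hae fun k p hk hp ↦ one_div_rpow_mul_le hk hp α)
          ((integrableOn_Ioi_rpow_of_lt (by linarith [hα.2]) hN0).const_mul _)
          (integrableOn_Ioi_rpow_of_lt (by norm_num) hN0)
    _ = 1 / 4 * (1 / ((1 - α) * N ^ (2 - α))) := by
        rw [integral_const_mul, integral_Ioi_rpow_sub_two hα.2 hN0,
          integral_Ioi_rpow_of_lt (by norm_num) hN0, show (-2 : ℝ) + 1 = -1 by norm_num,
          show 2 - α = -(α - 1 + -1) by ring, Real.rpow_neg hN0.le (α - 1 + -1),
          Real.rpow_add hN0, Real.rpow_neg_one]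
        field_simp
    _ < 1 / ((1 - α) * N ^ (2 - α)) := by
        have : 0 < 1 / ((1 - α) * N ^ (2 - α)) := by positivity
        linarith
end
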